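/- arXiv:2411.17241 — 6 statements merged into one kernel-verified Lean document; each statement's English description precedes it below -/
import Mathlib

section
/- Let f : (0,∞) → ℝ with f(1) = 0 be convex and twice continuously differentiable, and suppose there is a constant L ≥ 0 such that for all x, y ∈ (0,1): L ≤ (1/y)·f''(x/y) + (1/(1−y))·f''((1−x)/(1−y)). Then for all nonnegative vectors 𝐩, 𝐪 ∈ ℝⁿ with ‖𝐩‖₁ = ‖𝐪‖₁ = c > 0 and n = 2, the f-divergence satisfies D_f(𝐩‖𝐪) ≥ (L/(2c))·TV(𝐩,𝐪)². -/
/-!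
For `a, b > 0` the function `t ↦ a f(t/a) + b f((a+b-t)/b) - L/(2(a+b)) (t-a)²` is convex on
`[0, a+b]`: its second derivative `f''(t/a)/a + f''((a+b-t)/b)/b - L/(a+b)` is nonnegative by the
curvature hypothesis at `x = t/(a+b)`, `y = a/(a+b)`. It vanishes together with its derivative at
`t = a`, so it is nonnegative, which is the claim for `(a, b) = (q₀, q₁)` and `t = p₀`. When
`q₀ = 0`, the term `p₀ f'(∞)` is bounded below by applying the same inequality to
`(a, b) = (p₀x, c - p₀x)` and letting `x ↓ 0`.
-/

/-- `f'(∞) := lim_{x↓0} x f(1/x)`, taken in `EReal` (via `limsup`, which agrees with the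
limit whenever the latter exists, including the value `+∞`). -/
noncomputable def fDerivInfE (f : ℝ → ℝ) : EReal :=
  Filter.limsup (fun x : ℝ => ((x * f (1 / x) : ℝ) : EReal)) (nhdsWithin 0 (Set.Ioi 0))

/-- The `f`-divergence `D_f(𝐩‖𝐪) = Σᵢ qᵢ f(pᵢ/qᵢ)` with the standard conventions
`0 f(0/0) = 0` and `0 f(a/0) = a f'(∞)` for `a > 0`, valued in `EReal`. -/
noncomputable def fDivE (f : ℝ → ℝ) {n : ℕ} (p q : Fin n → ℝ) : EReal :=
  ∑ i, if q i = 0 then (p i : EReal) * fDerivInfE f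
    else ((q i * f (p i / q i) : ℝ) : EReal)

open Set Filter Topology

theorem ContinuousOn.continuousOn_Ici_of_tendsto {α β : Type*} [TopologicalSpace α]
    [LinearOrder α] [OrderTopology α] [TopologicalSpace β] {f : α → β} {a : α}
    (hf : ContinuousOn f (Ioi a)) (hfa : Tendsto f (𝓝[>] a) (𝓝 (f a))) : ContinuousOn f (Ici a) := by
  intro x hx
  rcases hx.eq_or_lt with rfl | hx
  · exact continuousWithinAt_Ioi_iff_Ici.1 hfa
  · exact (hf.continuousAt (Ioi_mem_nhds hx)).continuousWithinAt

theorem HasDerivAt.comp_div_const {f : ℝ → ℝ} {f' a x : ℝ} (hf : HasDerivAt f f' (x / a)) :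
    HasDerivAt (fun t => f (t / a)) (f' / a) x := by
  simpa [Function.comp_def, div_eq_mul_inv] using hf.comp x ((hasDerivAt_id x).div_const a)

theorem HasDerivAt.perspective {f : ℝ → ℝ} {f' a x : ℝ} (ha : a ≠ 0)
    (hf : HasDerivAt f f' (x / a)) : HasDerivAt (fun t => a * f (t / a)) f' x := by
  simpa [mul_div_cancel₀ _ ha] using hf.comp_div_const.const_mul a

theorem fDivE_comp_equiv (f : ℝ → ℝ) {n : ℕ} (p q : Fin n → ℝ) (e : Fin n ≃ Fin n) :
    fDivE f (p ∘ e) (q ∘ e) = fDivE f p q :=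
  e.sum_comp fun i => if q i = 0 then (p i : EReal) * fDerivInfE f
    else ((q i * f (p i / q i) : ℝ) : EReal)

theorem coe_le_fDerivInfE_of_tendsto {f u : ℝ → ℝ} {r : ℝ} (hu : Tendsto u (𝓝[>] 0) (𝓝 r))
    (hle : ∀ᶠ x in 𝓝[>] 0, u x ≤ x * f (1 / x)) : (r : EReal) ≤ fDerivInfE f := by
  rw [← (EReal.tendsto_coe.2 hu).limsup_eq]
  exact limsup_le_limsup (hle.mono fun x hx => EReal.coe_le_coe_iff.2 hx)

/-- `(1/y) f''(x/y) + (1/(1-y)) f''((1-x)/(1-y))` is the second derivative in `x` of the binary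
divergence `y f(x/y) + (1-y) f((1-x)/(1-y))`. -/
def BinaryCurvatureLowerBound (f : ℝ → ℝ) (L : ℝ) : Prop :=
  ∀ x y : ℝ, 0 < x → x < 1 → 0 < y → y < 1 →
    L ≤ (1 / y) * deriv (deriv f) (x / y) + (1 / (1 - y)) * deriv (deriv f) ((1 - x) / (1 - y))

theorem BinaryCurvatureLowerBound.div_le_of_mem_Ioo {f : ℝ → ℝ} {L a b t : ℝ}
    (hL : BinaryCurvatureLowerBound f L) (ha : 0 < a) (hb : 0 < b) (ht : t ∈ Ioo 0 (a + b)) :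
    L / (a + b) ≤ deriv (deriv f) (t / a) / a + deriv (deriv f) ((a + b - t) / b) / b := by
  have hc : 0 < a + b := by positivity
  have h := hL (t / (a + b)) (a / (a + b)) (div_pos ht.1 hc) ((div_lt_one hc).2 ht.2)
    (div_pos ha hc) ((div_lt_one hc).2 (by linarith))
  have hy : 1 - a / (a + b) = b / (a + b) := by field_simp; ring
  have hx : 1 - t / (a + b) = (a + b - t) / (a + b) := by field_simp
  rw [hy, hx, div_div_div_cancel_right₀ hc.ne', div_div_div_cancel_right₀ hc.ne'] at h
  rw [div_le_iff₀ hc]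
  refine h.trans_eq ?_
  rw [one_div_div, one_div_div]
  ring

/-- `D_f((t, a+b-t) ‖ (a, b))` minus the claimed lower bound. -/
noncomputable def binaryPinskerGap (f : ℝ → ℝ) (L a b t : ℝ) : ℝ :=
  a * f (t / a) + b * f ((a + b - t) / b) - L / (2 * (a + b)) * (t - a) ^ 2

theorem hasDerivAt_binaryPinskerGap {f : ℝ → ℝ} {L a b s : ℝ}
    (hf : DifferentiableOn ℝ f (Ioi 0)) (ha : 0 < a) (hb : 0 < b) (hs : s ∈ Ioo 0 (a + b)) :
    HasDerivAt (binaryPinskerGap f L a b)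
      (deriv f (s / a) - deriv f ((a + b - s) / b) - L / (a + b) * (s - a)) s := by
  have hD : ∀ x, 0 < x → HasDerivAt f (deriv f x) x := fun x hx =>
    (hf.differentiableAt (Ioi_mem_nhds hx)).hasDerivAt
  have h₁ := (hD _ (div_pos hs.1 ha)).perspective ha.ne'
  have h₂ := ((hD _ (div_pos (sub_pos.2 hs.2) hb)).perspective hb.ne').comp_const_sub (a + b) s
  have h₃ := (((hasDerivAt_id' s).sub_const a).pow 2).const_mul (L / (2 * (a + b)))
  refine ((h₁.add h₂).sub h₃).congr_deriv ?_
  field_simp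
  ring

theorem hasDerivAt_deriv_binaryPinskerGap {f : ℝ → ℝ} {L a b s : ℝ}
    (hf : DifferentiableOn ℝ (deriv f) (Ioi 0)) (ha : 0 < a) (hb : 0 < b)
    (hs : s ∈ Ioo 0 (a + b)) :
    HasDerivAt (fun t => deriv f (t / a) - deriv f ((a + b - t) / b) - L / (a + b) * (t - a))
      (deriv (deriv f) (s / a) / a + deriv (deriv f) ((a + b - s) / b) / b - L / (a + b)) s := by
  have hD : ∀ x, 0 < x → HasDerivAt (deriv f) (deriv (deriv f) x) x := fun x hx =>
    (hf.differentiableAt (Ioi_mem_nhds hx)).hasDerivAt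
  have h₁ := (hD _ (div_pos hs.1 ha)).comp_div_const
  have h₂ := (hD _ (div_pos (sub_pos.2 hs.2) hb)).comp_div_const.comp_const_sub (a + b) s
  have h₃ := ((hasDerivAt_id' s).sub_const a).const_mul (L / (a + b))
  refine ((h₁.sub h₂).sub h₃).congr_deriv ?_
  ring

theorem continuousOn_binaryPinskerGap {f : ℝ → ℝ} {L a b : ℝ} (hf : ContinuousOn f (Ici 0))
    (ha : 0 < a) (hb : 0 < b) : ContinuousOn (binaryPinskerGap f L a b) (Icc 0 (a + b)) := by
  refine ((continuousOn_const.mul (hf.comp (continuousOn_id.div_const a) ?_)).add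
    (continuousOn_const.mul (hf.comp ((continuousOn_const.sub continuousOn_id).div_const b)
      ?_))).sub (by fun_prop)
  · exact fun s hs => div_nonneg hs.1 ha.le
  · exact fun s hs => div_nonneg (sub_nonneg.2 hs.2) hb.le

theorem BinaryCurvatureLowerBound.convexOn_binaryPinskerGap {f : ℝ → ℝ} {L a b : ℝ}
    (hL : BinaryCurvatureLowerBound f L) (hf : ContDiffOn ℝ 2 f (Ioi 0))
    (hf0 : Tendsto f (𝓝[>] 0) (𝓝 (f 0))) (ha : 0 < a) (hb : 0 < b) :
    ConvexOn ℝ (Icc 0 (a + b)) (binaryPinskerGap f L a b) := by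
  have hf₁ : DifferentiableOn ℝ f (Ioi 0) := hf.differentiableOn two_ne_zero
  have hf₂ : DifferentiableOn ℝ (deriv f) (Ioi 0) :=
    (hf.deriv_of_isOpen isOpen_Ioi (by norm_num)).differentiableOn one_ne_zero
  refine convexOn_of_hasDerivWithinAt2_nonneg (convex_Icc 0 (a + b))
    (f' := fun t => deriv f (t / a) - deriv f ((a + b - t) / b) - L / (a + b) * (t - a))
    (f'' := fun t =>
      deriv (deriv f) (t / a) / a + deriv (deriv f) ((a + b - t) / b) / b - L / (a + b))
    (continuousOn_binaryPinskerGap (hf.continuousOn.continuousOn_Ici_of_tendsto hf0) ha hb)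
    ?_ ?_ ?_ <;> rw [interior_Icc]
  · exact fun s hs => (hasDerivAt_binaryPinskerGap hf₁ ha hb hs).hasDerivWithinAt
  · exact fun s hs => (hasDerivAt_deriv_binaryPinskerGap hf₂ ha hb hs).hasDerivWithinAt
  · exact fun s hs => sub_nonneg.2 (hL.div_le_of_mem_Ioo ha hb hs)

theorem BinaryCurvatureLowerBound.sq_le {f : ℝ → ℝ} {L a b t : ℝ}
    (hL : BinaryCurvatureLowerBound f L) (hf : ContDiffOn ℝ 2 f (Ioi 0)) (hf1 : f 1 = 0)
    (hf0 : Tendsto f (𝓝[>] 0) (𝓝 (f 0))) (ha : 0 < a) (hb : 0 < b) (ht : t ∈ Icc 0 (a + b)) :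
    L / (2 * (a + b)) * (t - a) ^ 2 ≤ a * f (t / a) + b * f ((a + b - t) / b) := by
  have hmin : IsMinOn (binaryPinskerGap f L a b) (Icc 0 (a + b)) a := by
    have hac : a ∈ Ioo 0 (a + b) := ⟨ha, by linarith⟩
    refine (hL.convexOn_binaryPinskerGap hf hf0 ha hb).isMinOn_of_rightDeriv_eq_zero
      (by rwa [interior_Icc]) ?_
    rw [((hasDerivAt_binaryPinskerGap (hf.differentiableOn two_ne_zero) ha hb
      hac).hasDerivWithinAt).derivWithin (uniqueDiffWithinAt_Ioi a)]
    simp [div_self ha.ne', div_self hb.ne']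
  have := isMinOn_iff.1 hmin t ht
  simp only [binaryPinskerGap, div_self ha.ne', add_sub_cancel_left, div_self hb.ne', hf1] at this
  linarith

theorem BinaryCurvatureLowerBound.sq_le_fDerivInfE {f : ℝ → ℝ} {L c s : ℝ}
    (hL : BinaryCurvatureLowerBound f L) (hf : ContDiffOn ℝ 2 f (Ioi 0)) (hf1 : f 1 = 0)
    (hf0 : Tendsto f (𝓝[>] 0) (𝓝 (f 0))) (hc : 0 < c) (hs : s ∈ Icc 0 c) :
    ((L / (2 * c) * s ^ 2 : ℝ) : EReal) ≤
      s * fDerivInfE f + ((c * f ((c - s) / c) : ℝ) : EReal) := by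
  rcases hs.1.eq_or_lt with rfl | hs₀
  · simp [div_self hc.ne', hf1]
  -- `hL.sq_le` at `(a, b, t) = (s x, c - s x, s)`, solved for `x f(1/x)`
  set u : ℝ → ℝ := fun x =>
    (L / (2 * c) * (s - s * x) ^ 2 - (c - s * x) * f ((c - s) / (c - s * x))) / s
  have hu : Tendsto u (𝓝[>] 0) (𝓝 (u 0)) := by
    have hfc : ContinuousOn f (Ici 0) := hf.continuousOn.continuousOn_Ici_of_tendsto hf0
    have hmaps : MapsTo (fun x => (c - s) / (c - s * x)) (Iio 1) (Ici 0) := fun x hx =>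
      div_nonneg (sub_nonneg.2 hs.2) (by nlinarith [hx.out, hs.2])
    have hcomp : ContinuousWithinAt (fun x => f ((c - s) / (c - s * x))) (Iio 1) 0 :=
      (hfc _ (hmaps (by norm_num : (0 : ℝ) ∈ Iio 1))).comp (f := fun x => (c - s) / (c - s * x))
        (ContinuousAt.continuousWithinAt (by fun_prop (disch := simp [hc.ne']))) hmaps
    have : ContinuousAt u 0 := by
      have := hcomp.continuousAt (Iio_mem_nhds one_pos)
      exact ((continuousAt_const.mul (by fun_prop)).sub
        ((by fun_prop : ContinuousAt (fun x : ℝ => c - s * x) 0).mul this)).div_const s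
    exact this.tendsto.mono_left nhdsWithin_le_nhds
  have hle : ∀ᶠ x in 𝓝[>] 0, u x ≤ x * f (1 / x) := by
    filter_upwards [Ioo_mem_nhdsGT one_pos] with x hx
    have hsx : 0 < s * x := mul_pos hs₀ hx.1
    have key := hL.sq_le hf hf1 hf0 hsx (by nlinarith [hx.2, hs.2] : 0 < c - s * x)
      (t := s) (by simp only [add_sub_cancel]; exact ⟨hs₀.le, hs.2⟩)
    rw [add_sub_cancel, div_mul_cancel_left₀ hs₀.ne', inv_eq_one_div] at key
    rw [div_le_iff₀ hs₀]
    nlinarith [key]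
  have hr := coe_le_fDerivInfE_of_tendsto hu hle
  have hsr : L / (2 * c) * s ^ 2 = s * u 0 + c * f ((c - s) / c) := by
    simp only [u, mul_zero, sub_zero]
    field_simp
    ring
  rw [hsr, EReal.coe_add, EReal.coe_mul]
  gcongr

theorem BinaryCurvatureLowerBound.sq_le_fDivE {f : ℝ → ℝ} {L c : ℝ}
    (hL : BinaryCurvatureLowerBound f L) (hf : ContDiffOn ℝ 2 f (Ioi 0)) (hf1 : f 1 = 0)
    (hf0 : Tendsto f (𝓝[>] 0) (𝓝 (f 0))) {p q : Fin 2 → ℝ} (hp : ∀ i, 0 ≤ p i)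
    (hq₀ : 0 ≤ q 0) (hq₁ : 0 < q 1) (hpsum : p 0 + p 1 = c) (hqsum : q 0 + q 1 = c) :
    ((L / (2 * c) * (p 0 - q 0) ^ 2 : ℝ) : EReal) ≤ fDivE f p q := by
  have hp₀ : p 0 ∈ Icc 0 c := ⟨hp 0, by linarith [hp 1]⟩
  simp only [fDivE, Fin.sum_univ_two, if_neg hq₁.ne']
  rcases hq₀.eq_or_lt with hq₀ | hq₀
  · have hq₁c : q 1 = c := by linarith
    rw [if_pos hq₀.symm, ← hq₀, sub_zero, hq₁c, show p 1 = c - p 0 by linarith]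
    exact hL.sq_le_fDerivInfE hf hf1 hf0 (hq₁c ▸ hq₁) hp₀
  · rw [if_neg hq₀.ne', ← EReal.coe_add, EReal.coe_le_coe_iff]
    have key := hL.sq_le hf hf1 hf0 hq₀ hq₁ (hqsum ▸ hp₀)
    rwa [hqsum, show c - p 0 = p 1 by linarith] at key

theorem fdiv_pinsker_binary_general (f : ℝ → ℝ)
    (hsmooth : ContDiffOn ℝ 2 f (Set.Ioi 0))
    (hf1 : f 1 = 0)
    (hf0 : Filter.Tendsto f (nhdsWithin 0 (Set.Ioi 0)) (nhds (f 0)))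
    (L : ℝ)
    (hL : ∀ x y : ℝ, 0 < x → x < 1 → 0 < y → y < 1 →
      L ≤ (1 / y) * deriv (deriv f) (x / y)
          + (1 / (1 - y)) * deriv (deriv f) ((1 - x) / (1 - y)))
    (c : ℝ) (hc : 0 < c) (p q : Fin 2 → ℝ)
    (hp : ∀ i, 0 ≤ p i) (hq : ∀ i, 0 ≤ q i)
    (hpsum : ∑ i, p i = c) (hqsum : ∑ i, q i = c) :
    ((L / (2 * c) * ((1 / 2 : ℝ) * ∑ i, |p i - q i|) ^ 2 : ℝ) : EReal) ≤ fDivE f p q := by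
  rw [Fin.sum_univ_two] at hpsum hqsum
  have htv : (1 / 2 : ℝ) * ∑ i, |p i - q i| = |p 0 - q 0| := by
    rw [Fin.sum_univ_two, show p 1 - q 1 = -(p 0 - q 0) by linarith, abs_neg]
    ring
  rw [htv, sq_abs]
  rcases (hq 1).eq_or_lt with hq₁ | hq₁
  · have key := BinaryCurvatureLowerBound.sq_le_fDivE hL hsmooth hf1 hf0
      (p := p ∘ Equiv.swap 0 1) (q := q ∘ Equiv.swap 0 1) (fun _ => hp _) (hq 1)
      (show 0 < q 0 by linarith) (by simpa [add_comm] using hpsum)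
      (by simpa [add_comm] using hqsum)
    rwa [fDivE_comp_equiv, Function.comp_apply, Function.comp_apply, Equiv.swap_apply_left,
      show p 1 - q 1 = -(p 0 - q 0) by linarith, neg_sq] at key
  · exact BinaryCurvatureLowerBound.sq_le_fDivE hL hsmooth hf1 hf0 hp (hq 0) hq₁ hpsum hqsum

/-- Let `f : (0,∞) → ℝ` with `f(1) = 0` be convex and twice continuously
differentiable (the value `f(0) := f(0⁺)` encodes the standard convention), and suppose
`L ≥ 0` satisfies `L ≤ (1/y) f''(x/y) + (1/(1−y)) f''((1−x)/(1−y))` for all `x, y ∈ (0,1)`.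
Then for all nonnegative two-dimensional vectors `𝐩, 𝐪` with `‖𝐩‖₁ = ‖𝐪‖₁ = c > 0`,
`D_f(𝐩‖𝐪) ≥ (L/(2c)) TV(𝐩,𝐪)²`. -/
theorem fdiv_pinsker_binary (f : ℝ → ℝ)
    (hconv : ConvexOn ℝ (Set.Ioi 0) f)
    (hsmooth : ContDiffOn ℝ 2 f (Set.Ioi 0))
    (hf1 : f 1 = 0)
    (hf0 : Filter.Tendsto f (nhdsWithin 0 (Set.Ioi 0)) (nhds (f 0)))
    (L : ℝ) (hL0 : 0 ≤ L)
    (hL : ∀ x y : ℝ, 0 < x → x < 1 → 0 < y → y < 1 →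
      L ≤ (1 / y) * deriv (deriv f) (x / y)
          + (1 / (1 - y)) * deriv (deriv f) ((1 - x) / (1 - y)))
    (c : ℝ) (hc : 0 < c) (p q : Fin 2 → ℝ)
    (hp : ∀ i, 0 ≤ p i) (hq : ∀ i, 0 ≤ q i)
    (hpsum : ∑ i, p i = c) (hqsum : ∑ i, q i = c) :
    ((L / (2 * c) * ((1 / 2 : ℝ) * ∑ i, |p i - q i|) ^ 2 : ℝ) : EReal) ≤ fDivE f p q :=
  fdiv_pinsker_binary_general f hsmooth hf1 hf0 L hL c hc p q hp hq hpsum hqsum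
end

section
/- Let α ∈ ℝ and let f_α(t) = (t^α − 1 − α(t−1))/(α(α−1)) for α ∉ {0,1}, with f₀(t) = −ln t + t − 1 and f₁(t) = t ln t − t + 1. Then for all x, y ∈ (0,1): 1 ≤ (1/y)·f_α''(x/y) + (1/(1−y))·f_α''((1−x)/(1−y)); that is, 1 ≤ x^{α−2} y^{1−α} + (1−x)^{α−2} (1−y)^{1−α}. -/
/-!
On `(0, ∞)` every generator has first derivative `(t ^ (α - 1) - 1) / (α - 1)` (read as `log t`
at `α = 1`), hence second derivative `t ^ (α - 2)`. Writing `β = α - 2`, the right-hand side is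
`(1 / y) (x / y) ^ β + (1 / (1 - y)) ((1 - x) / (1 - y)) ^ β`. One of the two ratios is at most `1`
and the other at least `1`, so for either sign of `β` one of the powers is at least `1`; its
prefactor `1 / y` or `1 / (1 - y)` is at least `1` too, and the other summand is nonnegative.
-/

open Real Set Filter Topology

noncomputable def renyiGenerator (α : ℝ) : ℝ → ℝ :=
  if α = 0 then fun t => -log t + t - 1
  else if α = 1 then fun t => t * log t - t + 1
  else fun t => (t ^ α - 1 - α * (t - 1)) / (α * (α - 1))

lemma deriv_deriv_eq_of_hasDerivAt {f g : ℝ → ℝ} {s : Set ℝ} {p c : ℝ} (hs : s ∈ 𝓝 p)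
    (hf : ∀ t ∈ s, HasDerivAt f (g t) t) (hg : HasDerivAt g c p) :
    deriv (deriv f) p = c := by
  have hf' : deriv f =ᶠ[𝓝 p] g := by
    filter_upwards [hs] with t ht using (hf t ht).deriv
  rw [hf'.deriv_eq, hg.deriv]

section RenyiGenerator

variable {α t : ℝ}

lemma hasDerivAt_renyiGenerator_of_ne_one (hα : α ≠ 1) (ht : 0 < t) :
    HasDerivAt (renyiGenerator α) ((t ^ (α - 1) - 1) / (α - 1)) t := by
  by_cases hα0 : α = 0
  · subst hα0
    simp only [renyiGenerator, if_pos]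
    refine (((hasDerivAt_log ht.ne').neg.add (hasDerivAt_id t)).sub_const 1).congr_deriv ?_
    rw [zero_sub, rpow_neg_one]
    ring
  · simp only [renyiGenerator, if_neg hα0, if_neg hα]
    have hpow : HasDerivAt (fun t : ℝ => t ^ α) (α * t ^ (α - 1)) t := by
      simpa [mul_comm] using hasDerivAt_rpow_const (p := α) (Or.inl ht.ne')
    refine (((hpow.sub_const 1).sub (((hasDerivAt_id t).sub_const 1).const_mul α)).div_const
      (α * (α - 1))).congr_deriv ?_
    have hα1 : α - 1 ≠ 0 := sub_ne_zero.mpr hα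
    field_simp

lemma hasDerivAt_renyiGenerator_one (ht : 0 < t) :
    HasDerivAt (renyiGenerator 1) (log t) t := by
  simp only [renyiGenerator, one_ne_zero, if_false, if_true]
  refine ((((hasDerivAt_id t).mul (hasDerivAt_log ht.ne')).sub (hasDerivAt_id t)).add_const
    1).congr_deriv ?_
  simp [ht.ne']

lemma hasDerivAt_rpow_sub_one_div (hα : α ≠ 1) (ht : t ≠ 0) :
    HasDerivAt (fun t => (t ^ (α - 1) - 1) / (α - 1)) (t ^ (α - 2)) t := by
  refine (((hasDerivAt_rpow_const (p := α - 1) (Or.inl ht)).sub_const 1).div_const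
    (α - 1)).congr_deriv ?_
  have hα1 : α - 1 ≠ 0 := sub_ne_zero.mpr hα
  rw [show α - 1 - 1 = α - 2 by ring]
  field_simp

lemma deriv_deriv_renyiGenerator (ht : 0 < t) :
    deriv (deriv (renyiGenerator α)) t = t ^ (α - 2) := by
  by_cases hα : α = 1
  · subst hα
    refine deriv_deriv_eq_of_hasDerivAt (Ioi_mem_nhds ht)
      (fun s hs => hasDerivAt_renyiGenerator_one hs) ?_
    rw [show (1 : ℝ) - 2 = -1 by norm_num, rpow_neg_one]
    exact hasDerivAt_log ht.ne'
  · exact deriv_deriv_eq_of_hasDerivAt (Ioi_mem_nhds ht)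
      (fun s hs => hasDerivAt_renyiGenerator_of_ne_one hα hs) (hasDerivAt_rpow_sub_one_div hα ht.ne')

end RenyiGenerator

lemma one_le_rpow_or_one_le_rpow {r s : ℝ} (hr : 0 < r) (hr1 : r ≤ 1) (hs : 1 ≤ s) (β : ℝ) :
    1 ≤ r ^ β ∨ 1 ≤ s ^ β := by
  rcases le_total β 0 with hβ | hβ
  · exact Or.inl (one_le_rpow_of_pos_of_le_one_of_nonpos hr hr1 hβ)
  · exact Or.inr (one_le_rpow hs hβ)

lemma one_le_one_div_mul_div_rpow_add {x y : ℝ} (hx : 0 < x) (hx1 : x < 1) (hy : 0 < y)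
    (hy1 : y < 1) (β : ℝ) :
    1 ≤ 1 / y * (x / y) ^ β + 1 / (1 - y) * ((1 - x) / (1 - y)) ^ β := by
  -- the expression is invariant under `(x, y) ↦ (1 - x, 1 - y)`
  wlog hxy : x ≤ y generalizing x y
  · have h := this (x := 1 - x) (y := 1 - y) (by linarith) (by linarith) (by linarith)
      (by linarith) (by linarith)
    rwa [sub_sub_cancel, sub_sub_cancel, add_comm] at h
  have hx' : 0 < 1 - x := by linarith
  have hy' : 0 < 1 - y := by linarith
  have hy_inv : 1 ≤ 1 / y := one_le_one_div hy hy1.le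
  have hy'_inv : 1 ≤ 1 / (1 - y) := one_le_one_div hy' (by linarith : 1 - y ≤ 1)
  have hleft : 0 ≤ 1 / y * (x / y) ^ β := by positivity
  have hright : 0 ≤ 1 / (1 - y) * ((1 - x) / (1 - y)) ^ β := by positivity
  rcases one_le_rpow_or_one_le_rpow (div_pos hx hy) ((div_le_one hy).mpr hxy)
      ((one_le_div hy').mpr (by linarith : 1 - y ≤ 1 - x)) β with h | h
  · linarith [one_le_mul_of_one_le_of_one_le hy_inv h]
  · linarith [one_le_mul_of_one_le_of_one_le hy'_inv h]

lemma one_div_mul_div_rpow {a b : ℝ} (ha : 0 ≤ a) (hb : 0 < b) (α : ℝ) :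
    1 / b * (a / b) ^ (α - 2) = a ^ (α - 2) * b ^ (1 - α) := by
  rw [div_rpow ha hb.le, show 1 - α = -(α - 2) + -1 by ring, rpow_add hb, rpow_neg hb.le,
    rpow_neg_one]
  ring

/-- For Rényi's information gain generator `f_α` (with
`f_α(t) = (t^α − 1 − α(t−1))/(α(α−1))` for `α ∉ {0,1}`, `f₀(t) = −ln t + t − 1`,
`f₁(t) = t ln t − t + 1`), for all `x, y ∈ (0,1)`:
`1 ≤ (1/y) f_α''(x/y) + (1/(1−y)) f_α''((1−x)/(1−y))`, that is,
`1 ≤ x^{α−2} y^{1−α} + (1−x)^{α−2} (1−y)^{1−α}`. -/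
theorem pinsker_condition_renyi (α : ℝ) (fα : ℝ → ℝ)
    (h0 : α = 0 → fα = fun t => -Real.log t + t - 1)
    (h1 : α = 1 → fα = fun t => t * Real.log t - t + 1)
    (hother : α ≠ 0 → α ≠ 1 →
      fα = fun t => (t ^ α - 1 - α * (t - 1)) / (α * (α - 1))) :
    ∀ x y : ℝ, 0 < x → x < 1 → 0 < y → y < 1 →
      (1 ≤ (1 / y) * deriv (deriv fα) (x / y)
          + (1 / (1 - y)) * deriv (deriv fα) ((1 - x) / (1 - y)))
        ∧ 1 ≤ x ^ (α - 2) * y ^ (1 - α) + (1 - x) ^ (α - 2) * (1 - y) ^ (1 - α) := by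
  intro x y hx hx1 hy hy1
  have hfα : fα = renyiGenerator α := by
    unfold renyiGenerator
    split_ifs with hα0 hα1
    exacts [h0 hα0, h1 hα1, hother hα0 hα1]
  subst hfα
  have hx' : 0 < 1 - x := by linarith
  have hy' : 0 < 1 - y := by linarith
  have key := one_le_one_div_mul_div_rpow_add hx hx1 hy hy1 (α - 2)
  rw [deriv_deriv_renyiGenerator (div_pos hx hy), deriv_deriv_renyiGenerator (div_pos hx' hy')]
  rw [one_div_mul_div_rpow hx.le hy, one_div_mul_div_rpow hx'.le hy'] at key ⊢
  exact ⟨key, key⟩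
end

section
/- Let α ∈ [1,2] and f_α(t) = (t^α − 1 − α(t−1))/(α(α−1)) (with f₁(t) = t ln t − t + 1). Then for all x, y ∈ (0,1): 4 ≤ x^{α−2} y^{1−α} + (1−x)^{α−2}(1−y)^{1−α}. -/
/-- For `α ∈ [1,2]` and the Rényi information gain generator `f_α`
(with `f_α''(t) = t^{α−2}`), for all `x, y ∈ (0,1)`:
`4 ≤ x^{α−2} y^{1−α} + (1−x)^{α−2} (1−y)^{1−α}`. -/
theorem pinsker_condition_renyi_four (α : ℝ) (hα : α ∈ Set.Icc (1 : ℝ) 2) :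
    ∀ x y : ℝ, 0 < x → x < 1 → 0 < y → y < 1 →
      4 ≤ x ^ (α - 2) * y ^ (1 - α) + (1 - x) ^ (α - 2) * (1 - y) ^ (1 - α) := by
  obtain ⟨hα1, hα2⟩ := hα
  intro x y hx hx1 hy hy1
  have h1x : (0:ℝ) < 1 - x := by linarith
  have h1y : (0:ℝ) < 1 - y := by linarith
  set a := x ^ (α - 2) * y ^ (1 - α) with ha
  set b := (1 - x) ^ (α - 2) * (1 - y) ^ (1 - α) with hb
  have hapos : 0 < a := by positivity
  have hbpos : 0 < b := by positivity
  -- a * b ≥ 4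
  have hxq : x * (1 - x) ≤ 1/4 := by nlinarith [sq_nonneg (x - 1/2)]
  have hyq : y * (1 - y) ≤ 1/4 := by nlinarith [sq_nonneg (y - 1/2)]
  have hxq0 : 0 < x * (1 - x) := by positivity
  have hyq0 : 0 < y * (1 - y) := by positivity
  have hab : 4 ≤ a * b := by
    have e1 : a * b = (x * (1 - x)) ^ (α - 2) * ((y * (1 - y)) ^ (1 - α)) := by
      rw [Real.mul_rpow hx.le h1x.le, Real.mul_rpow hy.le h1y.le]
      ring
    have l1 : ((1:ℝ)/4) ^ (α - 2) ≤ (x * (1 - x)) ^ (α - 2) :=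
      Real.rpow_le_rpow_of_nonpos hxq0 hxq (by linarith)
    have l2 : ((1:ℝ)/4) ^ (1 - α) ≤ (y * (1 - y)) ^ (1 - α) :=
      Real.rpow_le_rpow_of_nonpos hyq0 hyq (by linarith)
    have e2 : ((1:ℝ)/4) ^ (α - 2) * ((1:ℝ)/4) ^ (1 - α) = 4 := by
      rw [← Real.rpow_add (by norm_num), show α - 2 + (1 - α) = -1 by ring,
        Real.rpow_neg_one]
      norm_num
    calc (4:ℝ) = ((1:ℝ)/4) ^ (α - 2) * ((1:ℝ)/4) ^ (1 - α) := e2.symm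
      _ ≤ (x * (1 - x)) ^ (α - 2) * ((y * (1 - y)) ^ (1 - α)) := by
          apply mul_le_mul l1 l2 (by positivity) (by positivity)
      _ = a * b := e1.symm
  -- AM-GM
  have hsa : Real.sqrt a ^ 2 = a := Real.sq_sqrt hapos.le
  have hsb : Real.sqrt b ^ 2 = b := Real.sq_sqrt hbpos.le
  have hsab : 2 ≤ Real.sqrt a * Real.sqrt b := by
    rw [← Real.sqrt_mul hapos.le]
    calc (2:ℝ) = Real.sqrt 4 := by
          rw [show (4:ℝ) = 2^2 by norm_num, Real.sqrt_sq (by norm_num)]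
      _ ≤ Real.sqrt (a * b) := Real.sqrt_le_sqrt hab
  nlinarith [sq_nonneg (Real.sqrt a - Real.sqrt b)]
end

section
/- Let f(t) = (t−1)²(t+1)/t (the symmetric χ²-divergence generator). Then for all x, y ∈ (0,1): 16 ≤ (1/y)·f''(x/y) + (1/(1−y))·f''((1−x)/(1−y)), i.e. 16 ≤ 2/y + 2y²/x³ + 2/(1−y) + 2(1−y)²/(1−x)³, with equality at x = y = 1/2. -/
/-! Off `t = 0` the generator is `t² - t - 1 + 1/t`, so `f''(t) = 2 + 2/t³` and the right-hand side
equals `2/q + (2y²/x³ + 2(1-y)²/(1-x)³)` with `q = y(1-y)`. By AM-GM the bracket is at least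
`4q/(x(1-x))^{3/2} ≥ 32q`, since `x(1-x) ≤ 1/4`, and `2/q + 32q ≥ 16` is AM-GM once more. -/

open Filter Topology

theorem symmChiSq_eventuallyEq {t : ℝ} (ht : t ≠ 0) :
    (fun s : ℝ => (s - 1) ^ 2 * (s + 1) / s) =ᶠ[𝓝 t] fun s => s ^ 2 - s - 1 + s⁻¹ := by
  filter_upwards [eventually_ne_nhds ht] with s hs
  field_simp
  ring

theorem deriv_symmChiSq {t : ℝ} (ht : t ≠ 0) :
    deriv (fun s : ℝ => (s - 1) ^ 2 * (s + 1) / s) t = 2 * t - 1 - (t ^ 2)⁻¹ := by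
  have h : HasDerivAt (fun s : ℝ => s ^ 2 - s - 1 + s⁻¹) (2 * t - 1 - (t ^ 2)⁻¹) t := by
    refine ((((hasDerivAt_pow 2 t).sub (hasDerivAt_id t)).sub_const 1).add
      (hasDerivAt_inv ht)).congr_deriv ?_
    simp
    ring
  rw [(symmChiSq_eventuallyEq ht).deriv_eq, h.deriv]

theorem deriv_deriv_symmChiSq {t : ℝ} (ht : t ≠ 0) :
    deriv (deriv fun s : ℝ => (s - 1) ^ 2 * (s + 1) / s) t = 2 + 2 / t ^ 3 := by
  have h : HasDerivAt (fun s : ℝ => 2 * s - 1 - (s ^ 2)⁻¹) (2 + 2 / t ^ 3) t := by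
    refine ((((hasDerivAt_id t).const_mul 2).sub_const 1).sub
      ((hasDerivAt_pow 2 t).inv (pow_ne_zero 2 ht))).congr_deriv ?_
    field_simp
    ring
  have hderiv : deriv (fun s : ℝ => (s - 1) ^ 2 * (s + 1) / s) =ᶠ[𝓝 t]
      fun s => 2 * s - 1 - (s ^ 2)⁻¹ := by
    filter_upwards [eventually_ne_nhds ht] with s hs
    exact deriv_symmChiSq hs
  rw [hderiv.deriv_eq, h.deriv]

theorem sixteen_le_two_div_add_thirty_two_mul {q : ℝ} (hq : 0 < q) : 16 ≤ 2 / q + 32 * q := by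
  rw [div_add' _ _ _ hq.ne', le_div_iff₀ hq]
  nlinarith [sq_nonneg (4 * q - 1)]

theorem mul_one_sub_le_one_fourth (x : ℝ) : x * (1 - x) ≤ 1 / 4 := by
  nlinarith [sq_nonneg (2 * x - 1)]

theorem thirty_two_mul_le_two_mul_sq_div_pow_three_add {x y : ℝ} (hx : 0 < x) (hx1 : x < 1) :
    32 * (y * (1 - y)) ≤ 2 * y ^ 2 / x ^ 3 + 2 * (1 - y) ^ 2 / (1 - x) ^ 3 := by
  have hp : 0 < x * (1 - x) := mul_pos hx (sub_pos.2 hx1)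
  have hp3 : (x * (1 - x)) ^ 3 ≤ (1 / 4) ^ 3 :=
    pow_le_pow_left₀ hp.le (mul_one_sub_le_one_fourth x) 3
  have hprod : 4 * (2 * y ^ 2 / x ^ 3) * (2 * (1 - y) ^ 2 / (1 - x) ^ 3)
      = 16 * (y * (1 - y)) ^ 2 / (x * (1 - x)) ^ 3 := by
    field_simp
    ring
  have hsq : (32 * (y * (1 - y))) ^ 2 ≤ 4 * (2 * y ^ 2 / x ^ 3) * (2 * (1 - y) ^ 2 / (1 - x) ^ 3) := by
    rw [hprod, le_div_iff₀ (pow_pos hp 3)]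
    nlinarith [sq_nonneg (y * (1 - y))]
  exact le_of_sq_le_sq (hsq.trans (four_mul_le_sq_add _ _)) (by positivity)

theorem sixteen_le_two_div_add_two_mul_sq_div_pow_three {x y : ℝ} (hx : 0 < x) (hx1 : x < 1)
    (hy : 0 < y) (hy1 : y < 1) :
    16 ≤ 2 / y + 2 * y ^ 2 / x ^ 3 + 2 / (1 - y) + 2 * (1 - y) ^ 2 / (1 - x) ^ 3 := by
  have hy' : 0 < 1 - y := sub_pos.2 hy1
  have hq : 2 / y + 2 / (1 - y) = 2 / (y * (1 - y)) := by
    field_simp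
    ring
  have h₁ := sixteen_le_two_div_add_thirty_two_mul (mul_pos hy hy')
  have h₂ := thirty_two_mul_le_two_mul_sq_div_pow_three_add (y := y) hx hx1
  linarith

/-- For the symmetric χ²-divergence generator `f(t) = (t−1)²(t+1)/t`,
for all `x, y ∈ (0,1)`: `16 ≤ (1/y) f''(x/y) + (1/(1−y)) f''((1−x)/(1−y))`, i.e.
`16 ≤ 2/y + 2y²/x³ + 2/(1−y) + 2(1−y)²/(1−x)³`, with equality at `x = y = 1/2`. -/
theorem pinsker_condition_symmetric_chi_sq (f : ℝ → ℝ)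
    (hf : f = fun t => (t - 1) ^ 2 * (t + 1) / t) :
    (∀ x y : ℝ, 0 < x → x < 1 → 0 < y → y < 1 →
        (16 ≤ (1 / y) * deriv (deriv f) (x / y)
            + (1 / (1 - y)) * deriv (deriv f) ((1 - x) / (1 - y)))
          ∧ 16 ≤ 2 / y + 2 * y ^ 2 / x ^ 3 + 2 / (1 - y) + 2 * (1 - y) ^ 2 / (1 - x) ^ 3)
      ∧ 2 / (1 / 2 : ℝ) + 2 * (1 / 2 : ℝ) ^ 2 / (1 / 2 : ℝ) ^ 3
          + 2 / (1 - 1 / 2 : ℝ) + 2 * (1 - 1 / 2 : ℝ) ^ 2 / (1 - 1 / 2 : ℝ) ^ 3 = 16 := by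
  subst hf
  refine ⟨fun x y hx hx1 hy hy1 => ?_, by norm_num⟩
  have hx' : 0 < 1 - x := sub_pos.2 hx1
  have hy' : 0 < 1 - y := sub_pos.2 hy1
  have hsum := sixteen_le_two_div_add_two_mul_sq_div_pow_three hx hx1 hy hy1
  refine ⟨?_, hsum⟩
  rw [deriv_deriv_symmChiSq (div_pos hx hy).ne', deriv_deriv_symmChiSq (div_pos hx' hy').ne']
  convert hsum using 1
  field_simp
  ring
end

section
/- Let f(t) = (t−1)·ln t (Jeffrey's divergence generator). Then for all x, y ∈ (0,1): 8 ≤ (x+y)³/(4x²y²) + (2−x−y)³/(4(1−x)²(1−y)²), with the minimum 8 attained at x = y = 1/2. -/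
/-- For Jeffrey's divergence generator `f(t) = (t−1) ln t`, for all
`x, y ∈ (0,1)`: `8 ≤ (x+y)³/(4x²y²) + (2−x−y)³/(4(1−x)²(1−y)²)`, with the minimum `8`
attained at `x = y = 1/2`. -/
theorem pinsker_condition_jeffrey (f : ℝ → ℝ)
    (hf : f = fun t => (t - 1) * Real.log t) :
    (∀ x y : ℝ, 0 < x → x < 1 → 0 < y → y < 1 →
        8 ≤ (x + y) ^ 3 / (4 * x ^ 2 * y ^ 2)
            + (2 - x - y) ^ 3 / (4 * (1 - x) ^ 2 * (1 - y) ^ 2))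
      ∧ ((1 / 2 + 1 / 2 : ℝ) ^ 3 / (4 * (1 / 2 : ℝ) ^ 2 * (1 / 2 : ℝ) ^ 2)
          + (2 - 1 / 2 - 1 / 2 : ℝ) ^ 3 / (4 * (1 - 1 / 2 : ℝ) ^ 2 * (1 - 1 / 2 : ℝ) ^ 2) = 8) := by
  constructor
  · intro x y hx hx1 hy hy1
    have hux : (0:ℝ) < 1 - x := by linarith
    have huy : (0:ℝ) < 1 - y := by linarith
    have hs : (0:ℝ) < x + y := by linarith
    have ht : (0:ℝ) < 2 - x - y := by linarith
    have h1 : 4 / (x + y) ≤ (x + y) ^ 3 / (4 * x ^ 2 * y ^ 2) := by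
      rw [div_le_div_iff₀ hs (by positivity)]
      nlinarith [mul_nonneg (sq_nonneg (x - y)) (sq_nonneg (x + y)),
        mul_nonneg (sq_nonneg (x - y)) (mul_pos hx hy).le]
    have h2 : 4 / (2 - x - y) ≤ (2 - x - y) ^ 3 / (4 * (1 - x) ^ 2 * (1 - y) ^ 2) := by
      rw [div_le_div_iff₀ ht (by positivity)]
      nlinarith [mul_nonneg (sq_nonneg (x - y)) (sq_nonneg (2 - x - y)),
        mul_nonneg (sq_nonneg (x - y)) (mul_pos hux huy).le]
    have h3 : (8:ℝ) ≤ 4 / (x + y) + 4 / (2 - x - y) := by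
      rw [div_add_div _ _ hs.ne' ht.ne', le_div_iff₀ (by positivity)]
      nlinarith [sq_nonneg (x + y - 1)]
    linarith
  · norm_num
end

section
/- Let f(t) = (1/2)(t ln t − (t+1) ln((t+1)/2)) (Jensen–Shannon divergence generator). Then for all x, y ∈ (0,1): 1 ≤ (x+y)/(8xy) + (2−x−y)/(8(1−x)(1−y)), with minimum 1 attained at x = y = 1/2. -/
/-- For the Jensen–Shannon divergence generator
`f(t) = (1/2)(t ln t − (t+1) ln((t+1)/2))`, for all `x, y ∈ (0,1)`:
`1 ≤ (x+y)/(8xy) + (2−x−y)/(8(1−x)(1−y))`, with minimum `1` attained at `x = y = 1/2`. -/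
theorem pinsker_condition_jensen_shannon (f : ℝ → ℝ)
    (hf : f = fun t => (1 / 2) * (t * Real.log t - (t + 1) * Real.log ((t + 1) / 2))) :
    (∀ x y : ℝ, 0 < x → x < 1 → 0 < y → y < 1 →
        1 ≤ (x + y) / (8 * x * y) + (2 - x - y) / (8 * (1 - x) * (1 - y)))
      ∧ ((1 / 2 + 1 / 2 : ℝ) / (8 * (1 / 2 : ℝ) * (1 / 2 : ℝ))
          + (2 - 1 / 2 - 1 / 2 : ℝ) / (8 * (1 - 1 / 2 : ℝ) * (1 - 1 / 2 : ℝ)) = 1) := by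
  constructor
  · intro x y hx hx1 hy hy1
    have h1 : (0:ℝ) < 8 * x * y := by positivity
    have h2 : (0:ℝ) < 8 * (1 - x) * (1 - y) := by
      have hx' : 0 < 1 - x := by linarith
      have hy' : 0 < 1 - y := by linarith
      positivity
    rw [div_add_div _ _ (ne_of_gt h1) (ne_of_gt h2), le_div_iff₀ (by positivity)]
    nlinarith [mul_nonneg (sq_nonneg (x - y)) (mul_pos hx hy).le,
      mul_nonneg (sq_nonneg (x - y)) (mul_pos (by linarith : (0:ℝ) < 1 - x) (by linarith : (0:ℝ) < 1 - y)).le,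
      mul_nonneg (sq_nonneg (x + y - 1)) (mul_pos hx hy).le,
      mul_nonneg (sq_nonneg (x + y - 1)) (mul_pos (by linarith : (0:ℝ) < 1 - x) (by linarith : (0:ℝ) < 1 - y)).le,
      mul_pos (mul_pos hx hy) (mul_pos (by linarith : (0:ℝ) < 1 - x) (by linarith : (0:ℝ) < 1 - y)),
      sq_nonneg (x - y), sq_nonneg (x + y - 1)]
  · norm_num
end
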